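/- arXiv:1407.1275 — 9 statements merged into one kernel-verified Lean document; each statement's English description precedes it below -/
import Mathlib

section
/- Let T be a power-bounded d×d matrix. Then the Cesàro asymptotic limit A_{T,C} := lim_{n→∞} (1/n)·∑_{j=1}^n T^{*j} T^j exists (entry-wise limit of matrices). -/
/-
Mean ergodic theorem in finite dimension: the sum is `n` times the Birkhoff average of
`L X = Tᴴ X T` along the orbit of `L 1`, and `L` has bounded orbits since `T` and `Tᴴ` are
power-bounded. For such an operator, averages converge to `u` on `u + (L v - v)` with `L u = u`,
and such vectors are everything: a fixed point `L v - v` would have averages both equal to it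
and tending to `0`, so `ker (L - 1) ⊓ range (L - 1) = ⊥`, and rank–nullity finishes.
-/

open Filter Bornology Topology

open scoped Matrix Matrix.Norms.L2Operator

namespace Module.End

variable {𝕜 E : Type*} [RCLike 𝕜] [NormedAddCommGroup E] [NormedSpace 𝕜 E] (f : Module.End 𝕜 E)

theorem birkhoffAverage_id_eq (n : ℕ) :
    birkhoffAverage 𝕜 f id n = ⇑((n : 𝕜)⁻¹ • ∑ k ∈ Finset.range n, f ^ k : Module.End 𝕜 E) := by
  ext x
  simp [birkhoffAverage, birkhoffSum, Module.End.coe_pow]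

theorem tendsto_birkhoffAverage_apply_sub_self {v : E}
    (hv : IsBounded (Set.range fun n ↦ (f ^ n) v)) :
    Tendsto (fun n ↦ birkhoffAverage 𝕜 f id n (f v - v)) atTop (𝓝 0) := by
  have hsub (n : ℕ) : birkhoffAverage 𝕜 f id n (f v - v) =
      birkhoffAverage 𝕜 f id n (f v) - birkhoffAverage 𝕜 f id n v := by
    rw [birkhoffAverage_id_eq, map_sub]
  simp only [hsub]
  refine tendsto_birkhoffAverage_apply_sub_birkhoffAverage 𝕜 ?_
  simpa [Module.End.coe_pow] using hv

variable {f}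

theorem disjoint_ker_sub_one_range_sub_one (hf : ∀ x, IsBounded (Set.range fun n ↦ (f ^ n) x)) :
    Disjoint (LinearMap.ker (f - 1)) (LinearMap.range (f - 1)) := by
  rw [Submodule.disjoint_def]
  rintro _ hx ⟨v, rfl⟩
  have hfix : Function.IsFixedPt f ((f - 1) v) := by
    simpa [Function.IsFixedPt, sub_eq_zero] using hx
  exact tendsto_nhds_unique (hfix.tendsto_birkhoffAverage 𝕜 id)
    (tendsto_birkhoffAverage_apply_sub_self f (hf v))

theorem exists_tendsto_birkhoffAverage [FiniteDimensional 𝕜 E]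
    (hf : ∀ x, IsBounded (Set.range fun n ↦ (f ^ n) x)) (x : E) :
    ∃ y, Tendsto (birkhoffAverage 𝕜 f id · x) atTop (𝓝 y) := by
  have hdim := (LinearMap.finrank_range_add_finrank_ker (f - 1)).ge.trans_eq (add_comm _ _)
  have hcompl : IsCompl (LinearMap.ker (f - 1)) (LinearMap.range (f - 1)) :=
    (Submodule.isCompl_iff_disjoint _ _ hdim).2 (disjoint_ker_sub_one_range_sub_one hf)
  obtain ⟨u, hu, _, ⟨v, rfl⟩, rfl⟩ :=
    Submodule.mem_sup.1 (hcompl.sup_eq_top ▸ Submodule.mem_top (x := x))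
  have hfix : Function.IsFixedPt f u := by simpa [Function.IsFixedPt, sub_eq_zero] using hu
  refine ⟨u + 0, ?_⟩
  have hadd (n : ℕ) : birkhoffAverage 𝕜 f id n (u + (f - 1) v) =
      birkhoffAverage 𝕜 f id n u + birkhoffAverage 𝕜 f id n (f v - v) := by
    rw [birkhoffAverage_id_eq, map_add]; rfl
  simp only [hadd]
  exact (hfix.tendsto_birkhoffAverage 𝕜 id).add (tendsto_birkhoffAverage_apply_sub_self f (hf v))

end Module.End

namespace LinearMap

theorem pow_mulLeftRight {R A : Type*} [CommSemiring R] [Semiring A] [Algebra R A] (a b : A)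
    (n : ℕ) : mulLeftRight R (a, b) ^ n = mulLeftRight R (a ^ n, b ^ n) := by
  induction n with
  | zero => ext; simp
  | succ n ih =>
    ext x
    rw [pow_succ', Module.End.mul_apply, ih]
    simp only [mulLeftRight_apply, pow_succ' a, pow_succ b, mul_assoc]

theorem isBounded_range_pow_mulLeftRight_apply {𝕜 A : Type*} [NormedField 𝕜] [NormedRing A]
    [NormedAlgebra 𝕜 A] {a b : A} (ha : IsBounded (Set.range (a ^ ·)))
    (hb : IsBounded (Set.range (b ^ ·))) (x : A) :
    IsBounded (Set.range fun n ↦ (mulLeftRight 𝕜 (a, b) ^ n) x) := by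
  obtain ⟨Ca, hCa⟩ := isBounded_iff_forall_norm_le.1 ha
  obtain ⟨Cb, hCb⟩ := isBounded_iff_forall_norm_le.1 hb
  refine isBounded_iff_forall_norm_le.2 ⟨Ca * ‖x‖ * Cb, ?_⟩
  rintro _ ⟨n, rfl⟩
  dsimp only
  rw [pow_mulLeftRight, mulLeftRight_apply]
  calc ‖a ^ n * x * b ^ n‖ ≤ ‖a ^ n‖ * ‖x‖ * ‖b ^ n‖ := norm_mul₃_le
    _ ≤ Ca * ‖x‖ * Cb := by
      have hCa0 : 0 ≤ Ca := (norm_nonneg _).trans (hCa _ ⟨0, rfl⟩)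
      gcongr
      exacts [hCa _ ⟨n, rfl⟩, hCb _ ⟨n, rfl⟩]

end LinearMap

/-- For a power-bounded `d × d` complex matrix `T`, the Cesàro asymptotic limit
`A_{T,C} = lim_{n→∞} (1/n) ∑_{j=1}^n T^{*j} T^j` exists. -/
theorem cesaro_asymptotic_limit_exists (d : ℕ) (T : Matrix (Fin d) (Fin d) ℂ)
    (hpb : ∃ M > 0, ∀ n : ℕ, ‖T ^ n‖ < M) :
    ∃ A : Matrix (Fin d) (Fin d) ℂ,
      Tendsto (fun n : ℕ =>
          ((n : ℂ)⁻¹ • ∑ j ∈ Finset.range n, (T ^ (j + 1))ᴴ * T ^ (j + 1)))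
        atTop (nhds A) := by
  obtain ⟨M, -, hM⟩ := hpb
  have hbdd {S : Matrix (Fin d) (Fin d) ℂ} (hS : ∀ n, ‖S ^ n‖ ≤ M) :
      IsBounded (Set.range (S ^ ·)) :=
    isBounded_iff_forall_norm_le.2 ⟨M, Set.forall_mem_range.2 hS⟩
  have hT : ∀ n, ‖T ^ n‖ ≤ M := fun n ↦ (hM n).le
  have hTstar : ∀ n, ‖Tᴴ ^ n‖ ≤ M := fun n ↦ by
    rw [← Matrix.conjTranspose_pow, Matrix.l2_opNorm_conjTranspose]; exact hT n
  obtain ⟨A, hA⟩ := Module.End.exists_tendsto_birkhoffAverage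
    (LinearMap.isBounded_range_pow_mulLeftRight_apply (𝕜 := ℂ) (hbdd hTstar) (hbdd hT))
    (LinearMap.mulLeftRight ℂ (Tᴴ, T) 1)
  refine ⟨A, hA.congr fun n ↦ ?_⟩
  simp_rw [birkhoffAverage, birkhoffSum, id, ← Function.iterate_succ_apply, ← Module.End.coe_pow,
    LinearMap.pow_mulLeftRight, LinearMap.mulLeftRight_apply, mul_one, Matrix.conjTranspose_pow]
end

section
/- If T is a d×d matrix for which the Cesàro asymptotic limit A_{T,C} = lim_{n→∞} (1/n)·∑_{j=1}^n T^{*j} T^j exists, then T is power-bounded. -/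
open Filter

open scoped Matrix Matrix.Norms.L2Operator

/-!
For the Cesàro means `S n`, the identity `(T^n)ᴴ T^n = n S n - (n - 1) S (n - 1)` shows that
convergence of `S n` forces `‖T^n‖² = ‖(T^n)ᴴ T^n‖ = o(n)`, hence `‖T^n‖ = o(n)`. In finite
dimension such sublinear growth already gives power-boundedness. An eigenvalue with `|μ| > 1`
would give exponential growth. On a generalized eigenspace with `|μ| < 1` the orbits stay bounded
by a contraction estimate, inductively along `ker (T - μ)^k`. For `|μ| = 1` a Jordan chain
`T v = μ v + w`, `T w = μ w` has `‖T^n v‖ ≥ n ‖w‖ - ‖v‖`, forcing `w = 0`, so `T = μ` on that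
generalized eigenspace. Bounded orbits on spanning subspaces bound `‖T^n‖` by Banach–Steinhaus.
-/

open Asymptotics Finset Module.End
open scoped Topology

section Cesaro

variable {𝕜 E : Type*} [RCLike 𝕜] [NormedAddCommGroup E] [NormedSpace 𝕜 E]

theorem isLittleO_natCast_of_tendsto_cesaro {u : ℕ → E} {A : E}
    (h : Tendsto (fun n : ℕ => (n : 𝕜)⁻¹ • ∑ j ∈ range n, u (j + 1)) atTop (𝓝 A)) :
    u =o[atTop] (fun n : ℕ => (n : ℝ)) := by
  set S := fun n : ℕ => (n : 𝕜)⁻¹ • ∑ j ∈ range n, u (j + 1)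
  have hS_pred : Tendsto (fun n => S (n - 1)) atTop (𝓝 A) := h.comp (tendsto_sub_atTop_nat 1)
  have hsmul_S : ∀ n : ℕ, (n : 𝕜) • S n = ∑ j ∈ range n, u (j + 1) := by
    intro n
    rcases eq_or_ne n 0 with rfl | hn
    · simp
    · rw [smul_smul, mul_inv_cancel₀ (Nat.cast_ne_zero.2 hn), one_smul]
  have hu : ∀ᶠ n : ℕ in atTop, (n : 𝕜) • (S n - S (n - 1)) + S (n - 1) = u n := by
    filter_upwards [eventually_ge_atTop 1] with n hn
    obtain ⟨m, rfl⟩ := Nat.exists_eq_add_of_le' hn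
    have h1 := hsmul_S (m + 1)
    have h2 := hsmul_S m
    rw [sum_range_succ, ← h2] at h1
    rw [Nat.add_sub_cancel, smul_sub, h1]
    push_cast
    module
  refine IsLittleO.congr' ?_ hu EventuallyEq.rfl
  refine IsLittleO.add ?_ ((hS_pred.isBigO_one ℝ).trans_isLittleO ?_)
  · have hdiff : Tendsto (fun n => S n - S (n - 1)) atTop (𝓝 0) := by
      simpa using h.sub hS_pred
    rw [isLittleO_iff]
    intro c hc
    filter_upwards [Metric.tendsto_nhds.1 hdiff c hc] with n hn
    rw [dist_zero_right] at hn
    rw [norm_smul, RCLike.norm_natCast, Real.norm_natCast, mul_comm]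
    exact mul_le_mul_of_nonneg_right hn.le n.cast_nonneg
  · exact (isLittleO_one_left_iff ℝ).2
      (tendsto_norm_atTop_atTop.comp tendsto_natCast_atTop_atTop)

end Cesaro

theorem isLittleO_natCast_of_sq {a : ℕ → ℝ}
    (h : (fun n => a n ^ 2) =o[atTop] (fun n : ℕ => (n : ℝ))) :
    a =o[atTop] (fun n : ℕ => (n : ℝ)) := by
  refine IsLittleO.of_pow (h.trans_isBigO (IsBigO.of_bound 1 (Eventually.of_forall fun n => ?_)))
    two_ne_zero
  simp only [Pi.pow_apply, norm_pow, Real.norm_natCast, one_mul]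
  exact_mod_cast Nat.le_self_pow two_ne_zero n

theorem exists_le_of_le_mul_add {a : ℕ → ℝ} {r B : ℝ} (hr₀ : 0 ≤ r) (hr₁ : r < 1)
    (h : ∀ n, a (n + 1) ≤ r * a n + B) : ∃ M, ∀ n, a n ≤ M := by
  refine ⟨max (a 0) (B / (1 - r)), fun n => ?_⟩
  induction n with
  | zero => exact le_max_left _ _
  | succ n ih =>
    have hB : B ≤ (1 - r) * max (a 0) (B / (1 - r)) := by
      rw [← div_le_iff₀' (by linarith)]
      exact le_max_right _ _
    nlinarith [h n, mul_le_mul_of_nonneg_left ih hr₀]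

section Spectral

variable {E : Type*} [NormedAddCommGroup E] [NormedSpace ℂ E] {f : Module.End ℂ E} {μ : ℂ}

theorem norm_le_one_of_hasEigenvector_of_isLittleO {x : E} (hx : f.HasEigenvector μ x)
    (h : (fun n => (f ^ n) x) =o[atTop] (fun n : ℕ => (n : ℝ))) : ‖μ‖ ≤ 1 := by
  by_contra! hμ
  have hgeom : (fun n : ℕ => ‖x‖ * ‖μ‖ ^ n) =o[atTop] (fun n => ‖μ‖ ^ n) := by
    have := h.norm_left.trans (isLittleO_coe_const_pow_of_one_lt (R := ℝ) hμ)
    simpa only [hx.pow_apply, norm_smul, norm_pow, mul_comm] using this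
  rw [isLittleO_const_mul_left_iff (norm_ne_zero_iff.2 hx.2)] at hgeom
  exact isLittleO_irrefl (Frequently.of_forall fun n => by positivity) hgeom

theorem eq_zero_of_apply_eq_smul_add_of_isLittleO (hμ : ‖μ‖ = 1) {v w : E}
    (hv : f v = μ • v + w) (hw : f w = μ • w)
    (h : (fun n => (f ^ n) v) =o[atTop] (fun n : ℕ => (n : ℝ))) : w = 0 := by
  -- `(f ^ n) v = μ ^ n • v + (n * μ ^ (n - 1)) • w`, multiplied by `μ` to avoid `n - 1`
  have hpow : ∀ n : ℕ, μ • (f ^ n) v = μ ^ n • (μ • v + (n : ℂ) • w) := by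
    intro n
    induction n with
    | zero => simp
    | succ n ih =>
      rw [pow_succ', Module.End.mul_apply, ← map_smul, ih, map_smul, map_add, map_smul,
        map_smul, hv, hw]
      push_cast
      module
  have hlower : ∀ n : ℕ, n * ‖w‖ - ‖v‖ ≤ ‖(f ^ n) v‖ := by
    intro n
    have hnorm : ‖(f ^ n) v‖ = ‖μ • v + (n : ℂ) • w‖ := by
      have := congrArg norm (hpow n)
      rwa [norm_smul, norm_smul, norm_pow, hμ, one_pow, one_mul, one_mul] at this
    rw [hnorm]
    have := norm_sub_norm_le ((n : ℂ) • w) (-(μ • v))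
    simpa [norm_smul, hμ, add_comm] using this
  by_contra hw₀
  have hw_pos : 0 < ‖w‖ := norm_pos_iff.2 hw₀
  obtain ⟨n, hn_small, hn_large⟩ := ((h.def (half_pos hw_pos)).and
    (tendsto_natCast_atTop_atTop.eventually_gt_atTop (2 * ‖v‖ / ‖w‖))).exists
  rw [Real.norm_natCast] at hn_small
  rw [div_lt_iff₀ hw_pos] at hn_large
  linarith [hlower n]

theorem apply_eq_smul_of_mem_maxGenEigenspace_of_norm_eq_one (hμ : ‖μ‖ = 1)
    (h : ∀ x, (fun n => (f ^ n) x) =o[atTop] (fun n : ℕ => (n : ℝ))) {v : E}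
    (hv : v ∈ f.maxGenEigenspace μ) : f v = μ • v := by
  set N := f - μ • (1 : Module.End ℂ E)
  have hN : ∀ u, f u = μ • u + N u := fun u => by simp [N]
  have hker_sq : ∀ u, N (N u) = 0 → N u = 0 := fun u hu =>
    eq_zero_of_apply_eq_smul_add_of_isLittleO hμ (hN u) (by rw [hN, hu, add_zero]) (h u)
  have hker_pow : ∀ k u, (N ^ k) u = 0 → N u = 0 := by
    intro k
    induction k with
    | zero => intro u hu; simp_all
    | succ k ih => intro u hu; exact hker_sq u (ih (N u) (by rwa [pow_succ] at hu))
  obtain ⟨k, hk⟩ := (f.mem_maxGenEigenspace μ v).1 hv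
  rw [hN, hker_pow k v hk, add_zero]

theorem exists_norm_pow_apply_le_of_mem_maxGenEigenspace_of_norm_lt_one (hμ : ‖μ‖ < 1) {v : E}
    (hv : v ∈ f.maxGenEigenspace μ) : ∃ M, ∀ n, ‖(f ^ n) v‖ ≤ M := by
  set N := f - μ • (1 : Module.End ℂ E)
  obtain ⟨k, hk⟩ := (f.mem_maxGenEigenspace μ v).1 hv
  clear hv
  induction k generalizing v with
  | zero => exact ⟨0, fun n => by simp_all⟩
  | succ k ih =>
    obtain ⟨B, hB⟩ := ih (v := N v) (by rwa [pow_succ] at hk)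
    refine exists_le_of_le_mul_add (B := B) (norm_nonneg μ) hμ fun n => ?_
    have hstep : (f ^ (n + 1)) v = μ • (f ^ n) v + (f ^ n) (N v) := by
      rw [pow_succ, Module.End.mul_apply, show f v = μ • v + N v by simp [N], map_add, map_smul]
    rw [hstep]
    exact (norm_add_le _ _).trans (by rw [norm_smul]; exact add_le_add_right (hB n) _)

theorem exists_norm_pow_apply_le_of_mem_maxGenEigenspace
    (h : ∀ x, (fun n => (f ^ n) x) =o[atTop] (fun n : ℕ => (n : ℝ))) {v : E}
    (hv : v ∈ f.maxGenEigenspace μ) : ∃ M, ∀ n, ‖(f ^ n) v‖ ≤ M := by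
  rcases eq_or_ne v 0 with rfl | hv₀
  · exact ⟨0, fun n => by simp⟩
  have hμ_eig : f.HasEigenvalue μ :=
    HasUnifEigenvalue.lt zero_lt_one ((Submodule.ne_bot_iff _).2 ⟨v, hv, hv₀⟩)
  obtain ⟨x, hx⟩ := hμ_eig.exists_hasEigenvector
  rcases (norm_le_one_of_hasEigenvector_of_isLittleO hx (h x)).lt_or_eq with hμ | hμ
  · exact exists_norm_pow_apply_le_of_mem_maxGenEigenspace_of_norm_lt_one hμ hv
  · have hv_eig : f.HasEigenvector μ v :=
      ⟨mem_eigenspace_iff.2 (apply_eq_smul_of_mem_maxGenEigenspace_of_norm_eq_one hμ h hv), hv₀⟩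
    exact ⟨‖v‖, fun n => by rw [hv_eig.pow_apply, norm_smul, norm_pow, hμ, one_pow, one_mul]⟩

end Spectral

theorem ContinuousLinearMap.exists_norm_pow_le_of_isLittleO {E : Type*} [NormedAddCommGroup E]
    [NormedSpace ℂ E] [FiniteDimensional ℂ E] (g : E →L[ℂ] E)
    (h : (fun n => g ^ n) =o[atTop] (fun n : ℕ => (n : ℝ))) : ∃ M, ∀ n, ‖g ^ n‖ ≤ M := by
  have := FiniteDimensional.complete ℂ E
  have horbit : ∀ x, (fun n => ((g : Module.End ℂ E) ^ n) x) =o[atTop] (fun n : ℕ => (n : ℝ)) :=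
    fun x => by
      simp only [← ContinuousLinearMap.toLinearMap_pow, ContinuousLinearMap.coe_coe]
      exact (IsBigO.of_bound ‖x‖ (Eventually.of_forall fun n => by
        rw [mul_comm]; exact (g ^ n).le_opNorm x)).trans_isLittleO h
  refine banach_steinhaus fun v => ?_
  have hv : v ∈ ⨆ μ, maxGenEigenspace (g : Module.End ℂ E) μ := by
    rw [iSup_maxGenEigenspace_eq_top]; trivial
  refine Submodule.iSup_induction _ (motive := fun v => ∃ M, ∀ n, ‖(g ^ n) v‖ ≤ M) hv
    (fun μ x hx => ?_) ⟨0, fun n => by simp⟩ ?_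
  · simpa only [← ContinuousLinearMap.toLinearMap_pow, ContinuousLinearMap.coe_coe] using
      exists_norm_pow_apply_le_of_mem_maxGenEigenspace horbit hx
  · rintro x y ⟨Mx, hMx⟩ ⟨My, hMy⟩
    exact ⟨Mx + My, fun n => by
      rw [map_add]; exact (norm_add_le _ _).trans (add_le_add (hMx n) (hMy n))⟩

/-- If the Cesàro asymptotic limit `lim_{n→∞} (1/n) ∑_{j=1}^n T^{*j} T^j` of a `d × d`
complex matrix `T` exists, then `T` is power-bounded. -/
theorem powerbounded_of_cesaro_asymptotic_limit (d : ℕ) (T : Matrix (Fin d) (Fin d) ℂ)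
    (hC : ∃ A : Matrix (Fin d) (Fin d) ℂ,
      Tendsto (fun n : ℕ =>
          ((n : ℂ)⁻¹ • ∑ j ∈ Finset.range n, (T ^ (j + 1))ᴴ * T ^ (j + 1)))
        atTop (nhds A)) :
    ∃ M > 0, ∀ n : ℕ, ‖T ^ n‖ < M := by
  obtain ⟨A, hA⟩ := hC
  have hsq : (fun n => ‖T ^ n‖ ^ 2) =o[atTop] (fun n : ℕ => (n : ℝ)) := by
    have := (isLittleO_natCast_of_tendsto_cesaro (u := fun j => (T ^ j)ᴴ * T ^ j) hA).norm_left
    simp only [Matrix.l2_opNorm_conjTranspose_mul_self] at this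
    simpa only [sq] using this
  have hlin : (fun n => ‖T ^ n‖) =o[atTop] (fun n : ℕ => (n : ℝ)) := isLittleO_natCast_of_sq hsq
  set g := Matrix.toEuclideanCLM (𝕜 := ℂ) (n := Fin d) T
  have hnorm : ∀ n, ‖g ^ n‖ = ‖T ^ n‖ := fun n => by rw [← map_pow]; rfl
  obtain ⟨M, hM⟩ := g.exists_norm_pow_le_of_isLittleO (by
    rw [← isLittleO_norm_left]
    simpa only [hnorm] using hlin)
  refine ⟨M + 1, by linarith [(norm_nonneg (g ^ 0)).trans (hM 0)], fun n => ?_⟩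
  rw [← hnorm]
  linarith [hM n]
end

section
/- For a power-bounded d×d matrix T and any Banach limit L, the L-asymptotic limit A_{T,L} (the entry-wise L-limit of the sequence T^{*n}T^n) equals the Cesàro asymptotic limit A_{T,C} = lim_{n→∞} (1/n)·∑_{j=1}^n T^{*j}T^j. -/
/-!
Put `Φ X = Tᴴ X T`. Power-boundedness of `T` makes `Φ` power-bounded, and
`(T ^ (k + 1))ᴴ T ^ (k + 1)` is the `Φ`-orbit of `Tᴴ T`. Applying `Φ` to the `N`-th Cesàro mean
of an orbit shifts it by one step at a cost `O(1 / N)`, so the Cesàro limit `A` is fixed by `Φ`.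
Consequently the Cesàro means of the orbit started at step `n` differ from `A` by `Φ ^ n` applied
to the unshifted error, so they converge to `A` uniformly in `n`. A Banach limit, being shift
invariant, takes the same value on an entry sequence of the orbit as on its sequence of shifted
`N`-th Cesàro means; having norm one and fixing constants, it then lies within the uniform error
of the corresponding entry of `A`.
-/

open Filter BoundedContinuousFunction

open scoped Matrix Matrix.Norms.L2Operator

/-- `L` is a Banach limit: a norm-one continuous linear functional on bounded complex
sequences which extends ordinary limits, is positive on nonnegative real sequences,
and is shift-invariant. -/
structure IsBanachLimit (L : (ℕ →ᵇ ℂ) →L[ℂ] ℂ) : Prop where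
  norm_eq_one : ‖L‖ = 1
  tendsto_imp : ∀ (x : ℕ →ᵇ ℂ) (c : ℂ), Tendsto (⇑x) atTop (nhds c) → L x = c
  positive : ∀ x : ℕ →ᵇ ℂ, (∀ n, ∃ r : ℝ, 0 ≤ r ∧ x n = r) → ∃ s : ℝ, 0 ≤ s ∧ L x = s
  shift_invariant : ∀ x : ℕ →ᵇ ℂ,
    L (x.compContinuous ⟨fun n => n + 1, continuous_of_discreteTopology⟩) = L x

open Finset

section CesaroMean

variable (𝕜 : Type*) {E : Type*}

def cesaroMean [DivisionSemiring 𝕜] [AddCommMonoid E] [Module 𝕜 E] (x : ℕ → E) (N : ℕ) : E :=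
  (N : 𝕜)⁻¹ • ∑ k ∈ range N, x k

variable {𝕜}

lemma map_cesaroMean [DivisionSemiring 𝕜] [AddCommMonoid E] [Module 𝕜 E] {F G : Type*}
    [AddCommMonoid F] [Module 𝕜 F] [FunLike G E F] [LinearMapClass G 𝕜 E F]
    (g : G) (x : ℕ → E) (N : ℕ) :
    g (cesaroMean 𝕜 x N) = cesaroMean 𝕜 (fun k => g (x k)) N := by
  simp only [cesaroMean, map_smul, map_sum]

lemma cesaroMean_comp_succ [DivisionRing 𝕜] [AddCommGroup E] [Module 𝕜 E] (x : ℕ → E) (N : ℕ) :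
    cesaroMean 𝕜 (fun k => x (k + 1)) N = cesaroMean 𝕜 x N + (N : 𝕜)⁻¹ • (x N - x 0) := by
  rw [cesaroMean, cesaroMean, ← smul_add, add_sub]
  congr 1
  rw [eq_sub_iff_add_eq]
  exact (sum_range_succ' x N).symm.trans (sum_range_succ x N)

lemma tendsto_cesaroMean_comp_succ [RCLike 𝕜] [NormedAddCommGroup E] [NormedSpace 𝕜 E]
    {x : ℕ → E} {C : ℝ} (hx : ∀ k, ‖x k‖ ≤ C) {A : E}
    (hA : Tendsto (cesaroMean 𝕜 x) atTop (nhds A)) :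
    Tendsto (cesaroMean 𝕜 fun k => x (k + 1)) atTop (nhds A) := by
  have hbdd : IsBoundedUnder (· ≤ ·) atTop fun N => ‖x N - x 0‖ :=
    isBoundedUnder_of ⟨C + C, fun N => (norm_sub_le _ _).trans (add_le_add (hx N) (hx 0))⟩
  have hvanish := NormedField.tendsto_zero_smul_of_tendsto_zero_of_bounded
    (tendsto_inv_atTop_nhds_zero_nat (𝕜 := 𝕜)) hbdd
  have hsum := hA.add hvanish
  rw [add_zero] at hsum
  exact hsum.congr fun N => (cesaroMean_comp_succ x N).symm

end CesaroMean

lemma tendstoUniformly_of_dist_le {ι α β : Type*} [PseudoMetricSpace β] {F : ι → α → β}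
    {f : α → β} {l : Filter ι} {ε : ι → ℝ} (hε : Tendsto ε l (nhds 0))
    (h : ∀ i a, dist (f a) (F i a) ≤ ε i) : TendstoUniformly F f l :=
  Metric.tendstoUniformly_iff.2 fun δ hδ => by
    filter_upwards [hε.eventually (gt_mem_nhds hδ)] with i hi a using (h i a).trans_lt hi

namespace ContinuousLinearMap

variable {𝕜 E : Type*} [RCLike 𝕜] [NormedAddCommGroup E] [NormedSpace 𝕜 E] {Φ : E →L[𝕜] E}
  {C : ℝ} {x₀ A : E}

lemma map_eq_self_of_tendsto_cesaroMean (hΦ : ∀ n, ‖Φ ^ n‖ ≤ C)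
    (hA : Tendsto (cesaroMean 𝕜 fun k => (Φ ^ k) x₀) atTop (nhds A)) : Φ A = A := by
  have hbdd : ∀ k, ‖(Φ ^ k) x₀‖ ≤ C * ‖x₀‖ := fun k => le_of_opNorm_le _ (hΦ k) x₀
  have himage : Tendsto (fun N => Φ (cesaroMean 𝕜 (fun k => (Φ ^ k) x₀) N)) atTop (nhds A) := by
    simp only [map_cesaroMean, ← mul_apply_eq_comp, ← pow_succ']
    exact tendsto_cesaroMean_comp_succ hbdd hA
  exact tendsto_nhds_unique ((Φ.continuous.tendsto A).comp hA) himage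

lemma tendstoUniformly_cesaroMean_shift (hΦ : ∀ n, ‖Φ ^ n‖ ≤ C)
    (hA : Tendsto (cesaroMean 𝕜 fun k => (Φ ^ k) x₀) atTop (nhds A)) :
    TendstoUniformly (fun N n => cesaroMean 𝕜 (fun k => (Φ ^ (n + k)) x₀) N) (fun _ => A)
      atTop := by
  have hfix : ∀ n, (Φ ^ n) A = A := fun n => by
    rw [pow_apply_eq_iterate]
    exact Function.iterate_fixed (map_eq_self_of_tendsto_cesaroMean hΦ hA) n
  have hshift : ∀ N n, cesaroMean 𝕜 (fun k => (Φ ^ (n + k)) x₀) N - A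
      = (Φ ^ n) (cesaroMean 𝕜 (fun k => (Φ ^ k) x₀) N - A) := fun N n => by
    simp only [map_sub, hfix, map_cesaroMean, ← mul_apply_eq_comp, ← pow_add]
  have hε : Tendsto (fun N => C * dist (cesaroMean 𝕜 (fun k => (Φ ^ k) x₀) N) A) atTop
      (nhds 0) := by
    simpa only [dist_self, mul_zero] using (hA.dist (tendsto_const_nhds (x := A))).const_mul C
  refine tendstoUniformly_of_dist_le hε fun N n => ?_
  rw [dist_comm, dist_eq_norm, dist_eq_norm, hshift]
  exact le_of_opNorm_le _ (hΦ n) _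

end ContinuousLinearMap

lemma ContinuousLinearMap.mulLeftRight_pow {𝕜 R : Type*} [NontriviallyNormedField 𝕜]
    [SeminormedRing R] [NormedAlgebra 𝕜 R] (a b : R) (n : ℕ) :
    mulLeftRight 𝕜 R a b ^ n = mulLeftRight 𝕜 R (a ^ n) (b ^ n) := by
  induction n with
  | zero => ext; simp
  | succ n ih =>
    ext z
    rw [pow_succ, mul_apply_eq_comp, ih, pow_succ a, pow_succ' b]
    simp only [mulLeftRight_apply, mul_assoc]

namespace IsBanachLimit

variable {L : (ℕ →ᵇ ℂ) →L[ℂ] ℂ}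

lemma map_const (hL : IsBanachLimit L) (c : ℂ) : L (const ℕ c) = c :=
  hL.tendsto_imp _ c tendsto_const_nhds

lemma map_compContinuous_add (hL : IsBanachLimit L) (f : ℕ →ᵇ ℂ) (k : ℕ) :
    L (f.compContinuous ⟨fun n => n + k, continuous_of_discreteTopology⟩) = L f := by
  induction k with
  | zero => rfl
  | succ k ih =>
    rw [← ih, ← hL.shift_invariant (f.compContinuous ⟨fun n => n + k, _⟩)]
    congr 1
    ext n
    simp only [compContinuous_apply, ContinuousMap.coe_mk, add_right_comm n 1 k, add_assoc]

lemma map_cesaroMean_shift (hL : IsBanachLimit L) (f : ℕ →ᵇ ℂ) {N : ℕ} (hN : N ≠ 0) :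
    L (cesaroMean ℂ (fun k => f.compContinuous ⟨fun n => n + k, continuous_of_discreteTopology⟩) N)
      = L f := by
  rw [map_cesaroMean]
  simp only [hL.map_compContinuous_add, cesaroMean, sum_const, card_range, nsmul_eq_mul,
    smul_eq_mul]
  field_simp

lemma norm_sub_le_of_forall_norm_sub_le (hL : IsBanachLimit L) {g : ℕ →ᵇ ℂ} {c : ℂ} {ε : ℝ}
    (hε : 0 ≤ ε) (h : ∀ n, ‖g n - c‖ ≤ ε) : ‖L g - c‖ ≤ ε :=
  calc ‖L g - c‖ = ‖L (g - const ℕ c)‖ := by rw [map_sub, hL.map_const]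
    _ ≤ ‖L‖ * ‖g - const ℕ c‖ := L.le_opNorm _
    _ ≤ ε := by rw [hL.norm_eq_one, one_mul]; exact (norm_le hε).2 h

lemma eq_of_tendstoUniformly_cesaroMean (hL : IsBanachLimit L) {f : ℕ →ᵇ ℂ} {c : ℂ}
    (h : TendstoUniformly (fun N n => cesaroMean ℂ (fun k => f (n + k)) N) (fun _ => c) atTop) :
    L f = c := by
  refine eq_of_forall_dist_le fun ε hε => ?_
  obtain ⟨N, hN, hclose⟩ :=
    ((eventually_ne_atTop 0).and (Metric.tendstoUniformly_iff.1 h ε hε)).exists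
  rw [dist_eq_norm, ← hL.map_cesaroMean_shift f hN]
  refine hL.norm_sub_le_of_forall_norm_sub_le hε.le fun n => ?_
  rw [← dist_eq_norm, dist_comm, ← evalCLM_apply ℂ n, map_cesaroMean]
  exact (hclose n).le

end IsBanachLimit

/-- For a power-bounded `d × d` matrix `T` and any Banach limit `L`, the `L`-asymptotic
limit (the entry-wise `L`-limit of the sequence `T^{*n} T^n`, `n ≥ 1`) equals the Cesàro
asymptotic limit `A = lim_{n→∞} (1/n) ∑_{j=1}^n T^{*j} T^j`. -/
theorem banach_limit_eq_cesaro_asymptotic_limit (d : ℕ) (T : Matrix (Fin d) (Fin d) ℂ)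
    (hpb : ∃ M > 0, ∀ n : ℕ, ‖T ^ n‖ < M)
    (L : (ℕ →ᵇ ℂ) →L[ℂ] ℂ) (hL : IsBanachLimit L)
    (A : Matrix (Fin d) (Fin d) ℂ)
    (hA : Tendsto (fun n : ℕ =>
          ((n : ℂ)⁻¹ • ∑ j ∈ Finset.range n, (T ^ (j + 1))ᴴ * T ^ (j + 1)))
        atTop (nhds A)) :
    ∀ (i j : Fin d) (f : ℕ →ᵇ ℂ),
      (∀ n : ℕ, f n = ((T ^ (n + 1))ᴴ * T ^ (n + 1)) i j) → L f = A i j := by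
  intro i j f hf
  obtain ⟨M, -, hM⟩ := hpb
  set Φ := ContinuousLinearMap.mulLeftRight ℂ (Matrix (Fin d) (Fin d) ℂ) Tᴴ T
  have hΦ : ∀ n, ‖Φ ^ n‖ ≤ M * M := fun n => by
    rw [ContinuousLinearMap.mulLeftRight_pow, ← Matrix.conjTranspose_pow]
    refine (ContinuousLinearMap.opNorm_mulLeftRight_apply_apply_le _ _ _ _).trans ?_
    rw [Matrix.l2_opNorm_conjTranspose]
    exact mul_self_le_mul_self (norm_nonneg _) (hM n).le
  have horbit : ∀ k, (T ^ (k + 1))ᴴ * T ^ (k + 1) = (Φ ^ k) (Tᴴ * T) := fun k => by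
    rw [ContinuousLinearMap.mulLeftRight_pow, ContinuousLinearMap.mulLeftRight_apply,
      Matrix.conjTranspose_pow, pow_succ, pow_succ']
    simp only [mul_assoc]
  simp only [horbit] at hA hf
  have hentry := (Matrix.entryLinearMap ℂ ℂ i j).toContinuousLinearMap.uniformContinuous
    |>.comp_tendstoUniformly (ContinuousLinearMap.tendstoUniformly_cesaroMean_shift hΦ hA)
  refine hL.eq_of_tendstoUniformly_cesaroMean ?_
  convert hentry using 1
  · ext N n
    simp [hf, map_cesaroMean]
  · ext
    simp
end

section
/- A positive definite d×d matrix A with eigenvalues t_1,…,t_d > 0 (counted with multiplicity) satisfies ∑_{j=1}^d 1/t_j = d if and only if there exists S ∈ GL_d(ℂ) whose columns are all unit vectors and A = (S S^*)^{-1}. -/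
/-!
The trace of `A⁻¹` is `∑ 1/t_j`, and if `A⁻¹ = S Sᴴ` this trace is the sum of the squared
column norms of `S`, i.e. `d`. Conversely, write `A⁻¹ = U diag(1/t) Uᴴ` with `U` unitary and put
`S = U diag(t^{-1/2}) F` with `F` the unitary Fourier matrix. Then `S Sᴴ = A⁻¹`, and since every
entry of `F` has modulus `d^{-1/2}`, the `j`-th column of `S` has squared norm `(1/d) ∑ 1/t_k = 1`.
-/

open scoped Matrix ComplexOrder

theorem Fin.sum_pow_eq_ite_of_pow_eq_one {K : Type*} [Field K] [DecidableEq K] {d : ℕ} {ζ : K}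
    (hζ : ζ ^ d = 1) : ∑ j : Fin d, ζ ^ (j : ℕ) = if ζ = 1 then (d : K) else 0 := by
  rw [Fin.sum_univ_eq_sum_range (ζ ^ ·)]
  split_ifs with h
  · simp [h]
  · exact eq_zero_of_ne_zero_of_mul_right_eq_zero (sub_ne_zero.2 h)
      (by rw [geom_sum_mul, hζ, sub_self])

namespace Matrix

section RCLike

variable {𝕜 m n : Type*} [RCLike 𝕜] [Fintype m]

theorem conjTranspose_mul_self_apply_self (A : Matrix m n 𝕜) (j : n) :
    (Aᴴ * A) j j = ((∑ i, ‖A i j‖ ^ 2 : ℝ) : 𝕜) := by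
  simp [mul_apply, RCLike.conj_mul]

theorem trace_mul_conjTranspose_self [Fintype n] (A : Matrix m n 𝕜) :
    (A * Aᴴ).trace = ((∑ j, ∑ i, ‖A i j‖ ^ 2 : ℝ) : 𝕜) := by
  rw [trace_mul_comm, trace]
  simp [conjTranspose_mul_self_apply_self]

theorem sum_norm_sq_unitary_mul_apply [DecidableEq m] (U : unitary (Matrix m m 𝕜))
    (M : Matrix m n 𝕜) (j : n) :
    ∑ i, ‖((U : Matrix m m 𝕜) * M) i j‖ ^ 2 = ∑ i, ‖M i j‖ ^ 2 := by
  have h := conjTranspose_mul_self_apply_self ((U : Matrix m m 𝕜) * M) j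
  rw [conjTranspose_mul, Matrix.mul_assoc, ← Matrix.mul_assoc (U : Matrix m m 𝕜)ᴴ,
    ← star_eq_conjTranspose, Unitary.coe_star_mul_self, Matrix.one_mul,
    conjTranspose_mul_self_apply_self] at h
  exact_mod_cast h.symm

theorem IsHermitian.trace_inv [Fintype n] [DecidableEq n] {A : Matrix n n 𝕜}
    (hA : A.IsHermitian) (hu : IsUnit A) : A⁻¹.trace = ∑ i, ((hA.eigenvalues i)⁻¹ : 𝕜) := by
  rw [nonsing_inv_eq_ringInverse, ← cfc_ringInverse_id (R := ℝ) A hu hA.isSelfAdjoint,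
    hA.cfc_eq, IsHermitian.cfc, Unitary.conjStarAlgAut_apply, trace_mul_cycle,
    Unitary.coe_star_mul_self, Matrix.one_mul, trace_diagonal]
  simp

end RCLike

open Complex

noncomputable def fourierMatrix (d : ℕ) : Matrix (Fin d) (Fin d) ℂ :=
  of fun i j => exp (2 * Real.pi * I / d) ^ ((i : ℕ) * j) / Real.sqrt d

theorem norm_sq_fourierMatrix_apply {d : ℕ} (i j : Fin d) :
    ‖fourierMatrix d i j‖ ^ 2 = (d : ℝ)⁻¹ := by
  have hd : d ≠ 0 := i.pos.ne'
  simp [fourierMatrix, (isPrimitiveRoot_exp d hd).norm'_eq_one hd]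

theorem fourierMatrix_mul_conjTranspose (d : ℕ) : fourierMatrix d * (fourierMatrix d)ᴴ = 1 := by
  ext i k
  have hd : d ≠ 0 := i.pos.ne'
  set ω := exp (2 * Real.pi * I / d)
  have hω : IsPrimitiveRoot ω d := isPrimitiveRoot_exp d hd
  have hconj : starRingEnd ℂ ω = ω⁻¹ := (inv_eq_conj (hω.norm'_eq_one hd)).symm
  set ζ := ω ^ (i : ℕ) * (ω ^ (k : ℕ))⁻¹ with hζ_def
  have hζ_pow : ζ ^ d = 1 := by
    rw [mul_pow, inv_pow, ← pow_mul, ← pow_mul, mul_comm (i : ℕ), mul_comm (k : ℕ), pow_mul,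
      pow_mul, hω.pow_eq_one, one_pow, one_pow, inv_one, mul_one]
  have hζ_eq_one : ζ = 1 ↔ i = k := by
    rw [mul_inv_eq_one₀ (pow_ne_zero _ (hω.ne_zero hd)), Fin.ext_iff]
    exact ⟨hω.pow_inj i.isLt k.isLt, fun h => h ▸ rfl⟩
  have hentry (j : Fin d) :
      fourierMatrix d i j * star (fourierMatrix d k j) = ζ ^ (j : ℕ) / d := by
    have hsqrt : ((Real.sqrt d : ℝ) : ℂ) * (Real.sqrt d : ℝ) = d := by
      rw [← ofReal_mul, Real.mul_self_sqrt d.cast_nonneg, ofReal_natCast]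
    simp only [fourierMatrix, of_apply, star_div₀, star_pow, Complex.star_def, conj_ofReal]
    change ω ^ _ / _ * (starRingEnd ℂ ω ^ _ / _) = _
    rw [hconj, div_mul_div_comm, hsqrt, hζ_def, mul_pow, ← pow_mul, inv_pow, inv_pow, ← pow_mul]
  simp only [mul_apply, conjTranspose_apply, hentry, ← Finset.sum_div,
    Fin.sum_pow_eq_ite_of_pow_eq_one hζ_pow, hζ_eq_one, one_apply]
  split_ifs <;> simp [hd]

theorem PosSemidef.exists_unit_columns_mul_conjTranspose_eq {d : ℕ}
    {B : Matrix (Fin d) (Fin d) ℂ} (hB : B.PosSemidef) (htr : B.trace = d) :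
    ∃ S : Matrix (Fin d) (Fin d) ℂ, (∀ j, ∑ i, ‖S i j‖ ^ 2 = 1) ∧ S * Sᴴ = B := by
  set U := hB.1.eigenvectorUnitary
  set t := hB.1.eigenvalues
  set D : Matrix (Fin d) (Fin d) ℂ := diagonal fun k => (Real.sqrt (t k) : ℂ)
  have hDD : D * Dᴴ = diagonal fun k => (t k : ℂ) := by
    rw [diagonal_conjTranspose, diagonal_mul_diagonal]
    congr 1
    ext k
    simp only [Pi.star_apply, Complex.star_def, conj_ofReal, ← ofReal_mul]
    rw [Real.mul_self_sqrt (hB.eigenvalues_nonneg k)]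
  have hsum : ∑ k, t k = d := by
    have : ((∑ k, t k : ℝ) : ℂ) = d := by
      push_cast
      exact hB.1.trace_eq_sum_eigenvalues.symm.trans htr
    exact_mod_cast this
  refine ⟨U * (D * fourierMatrix d), fun j => ?_, ?_⟩
  · have hd : (d : ℝ) ≠ 0 := Nat.cast_ne_zero.2 j.pos.ne'
    have hterm (k : Fin d) : ‖(D * fourierMatrix d) k j‖ ^ 2 = t k / d := by
      rw [diagonal_mul, norm_mul, mul_pow, norm_sq_fourierMatrix_apply, norm_real,
        Real.norm_eq_abs, sq_abs, Real.sq_sqrt (hB.eigenvalues_nonneg k), div_eq_mul_inv]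
    rw [sum_norm_sq_unitary_mul_apply, Finset.sum_congr rfl fun k _ => hterm k,
      ← Finset.sum_div, hsum, div_self hd]
  · calc (U : Matrix _ _ ℂ) * (D * fourierMatrix d) * ((U : Matrix _ _ ℂ) * (D * fourierMatrix d))ᴴ
        = (U : Matrix _ _ ℂ) * (D * (fourierMatrix d * (fourierMatrix d)ᴴ) * Dᴴ) *
            star (U : Matrix _ _ ℂ) := by
          simp only [conjTranspose_mul, Matrix.mul_assoc, star_eq_conjTranspose]
      _ = B := by
          rw [fourierMatrix_mul_conjTranspose, Matrix.mul_one, hDD]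
          exact hB.1.spectral_theorem.symm

end Matrix

open Matrix in
/-- A positive definite `d × d` matrix `A` with eigenvalues `t_1, …, t_d` (with multiplicity)
satisfies `∑ 1/t_j = d` if and only if `A = (S S^*)⁻¹` for some invertible `S` whose columns
are all unit vectors. -/
theorem posdef_inverse_trace_char (d : ℕ) (A : Matrix (Fin d) (Fin d) ℂ)
    (hA : A.PosDef) :
    (∑ j : Fin d, (hA.1.eigenvalues j)⁻¹ = (d : ℝ)) ↔
      ∃ S : Matrix (Fin d) (Fin d) ℂ, IsUnit S ∧
        (∀ j : Fin d, ∑ i : Fin d, ‖S i j‖ ^ 2 = 1) ∧ A = (S * Sᴴ)⁻¹ := by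
  have htrace : A⁻¹.trace = ∑ j, ((hA.1.eigenvalues j)⁻¹ : ℂ) := hA.1.trace_inv hA.isUnit
  constructor
  · intro hsum
    obtain ⟨S, hcols, hSS⟩ := hA.inv.posSemidef.exists_unit_columns_mul_conjTranspose_eq
      (by rw [htrace]; exact_mod_cast hsum)
    refine ⟨S, isUnit_of_mul_isUnit_left (hSS ▸ hA.inv.isUnit), hcols, ?_⟩
    rw [hSS, nonsing_inv_nonsing_inv A ((isUnit_iff_isUnit_det A).1 hA.isUnit)]
  · rintro ⟨S, hS, hcols, rfl⟩
    have hSS : IsUnit (S * Sᴴ).det :=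
      (isUnit_iff_isUnit_det _).1 (hS.mul ((isUnit_conjTranspose S).2 hS))
    have hnorms : ∑ j : Fin d, ∑ i, ‖S i j‖ ^ 2 = d := by simp [hcols]
    rw [nonsing_inv_nonsing_inv _ hSS, trace_mul_conjTranspose_self, hnorms] at htrace
    apply Complex.ofReal_injective
    push_cast
    exact htrace.symm
end

section
/- Given positive reals t_1,…,t_d with ∑_j 1/t_j = d, there exists an invertible d×d complex matrix S all of whose columns are unit vectors such that S S^* = diag(1/t_1,…,1/t_d). -/
/-!
Let `U` be the normalized discrete Fourier transform matrix: it is unitary and every entry has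
modulus `1/√d`. Put `S = diag(t₁^{-1/2}, …, t_d^{-1/2}) · U`. Unitarity of `U` gives
`S S^* = diag(1/t₁, …, 1/t_d)`, and flatness of `U` gives `∑ᵢ |S i j|² = (1/d) ∑ᵢ 1/tᵢ = 1`.
-/

open scoped Matrix ComplexConjugate

open Matrix

namespace ZMod

variable {n : ℕ} [NeZero n]

lemma norm_stdAddChar (x : ZMod n) : ‖stdAddChar x‖ = 1 := by
  rw [stdAddChar_apply]
  exact Circle.norm_coe _

lemma conj_stdAddChar (x : ZMod n) : conj (stdAddChar x) = stdAddChar (-x) := by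
  rw [stdAddChar_apply, stdAddChar_apply, AddChar.map_neg_eq_inv, Circle.coe_inv_eq_conj]

noncomputable def dftMatrix (n : ℕ) [NeZero n] : Matrix (ZMod n) (ZMod n) ℂ :=
  fun k l => ((√n : ℝ) : ℂ)⁻¹ * stdAddChar (k * l)

lemma norm_sq_dftMatrix_apply (k l : ZMod n) : ‖dftMatrix n k l‖ ^ 2 = (n : ℝ)⁻¹ := by
  rw [dftMatrix, norm_mul, norm_stdAddChar, mul_one, norm_inv, Complex.norm_real,
    Real.norm_of_nonneg (Real.sqrt_nonneg _), inv_pow, Real.sq_sqrt n.cast_nonneg]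

lemma dftMatrix_mul_conjTranspose : dftMatrix n * (dftMatrix n)ᴴ = 1 := by
  ext k l
  have hn : (n : ℂ) ≠ 0 := NeZero.ne _
  have hsqrt : ((√n : ℝ) : ℂ)⁻¹ * conj ((√n : ℝ) : ℂ)⁻¹ = (n : ℂ)⁻¹ := by
    rw [map_inv₀, Complex.conj_ofReal, ← mul_inv, ← Complex.ofReal_mul,
      Real.mul_self_sqrt n.cast_nonneg, Complex.ofReal_natCast]
  have hchar : ∀ m : ZMod n,
      stdAddChar (k * m) * conj (stdAddChar (l * m)) = stdAddChar (m * (k - l)) := fun m => by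
    rw [conj_stdAddChar, ← AddChar.map_add_eq_mul]
    ring_nf
  calc (dftMatrix n * (dftMatrix n)ᴴ) k l
      = (n : ℂ)⁻¹ * ∑ m : ZMod n, stdAddChar (m * (k - l)) := by
        simp only [mul_apply, conjTranspose_apply, dftMatrix, RCLike.star_def, map_mul,
          Finset.mul_sum, ← hchar, ← hsqrt]
        exact Finset.sum_congr rfl fun m _ => by ring
    _ = (1 : Matrix (ZMod n) (ZMod n) ℂ) k l := by
        rw [AddChar.sum_mulShift _ (isPrimitive_stdAddChar n), card, one_apply]
        by_cases hkl : k = l <;> simp [hkl, sub_eq_zero, hn]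

end ZMod

lemma exists_mul_conjTranspose_eq_one_forall_norm_sq_eq (ι : Type*) [Fintype ι] [DecidableEq ι] :
    ∃ U : Matrix ι ι ℂ, U * Uᴴ = 1 ∧ ∀ i j, ‖U i j‖ ^ 2 = (Fintype.card ι : ℝ)⁻¹ := by
  rcases isEmpty_or_nonempty ι with hι | hι
  · exact ⟨1, by simp, fun i => isEmptyElim i⟩
  let e : ι ≃ ZMod (Fintype.card ι) :=
    (Fintype.equivFin ι).trans (ZMod.finEquiv (Fintype.card ι)).toEquiv
  refine ⟨(ZMod.dftMatrix _).submatrix e e, ?_, fun i j => ?_⟩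
  rw [conjTranspose_submatrix, submatrix_mul_equiv, ZMod.dftMatrix_mul_conjTranspose,
    submatrix_one_equiv]
  exact ZMod.norm_sq_dftMatrix_apply _ _

section RowScaling

variable {ι : Type*} [Fintype ι] [DecidableEq ι]

lemma diagonal_sqrt_mul_mul_conjTranspose {U : Matrix ι ι ℂ} (hU : U * Uᴴ = 1) {a : ι → ℝ}
    (ha : ∀ i, 0 ≤ a i) :
    diagonal (fun i => (√(a i) : ℂ)) * U * (diagonal (fun i => (√(a i) : ℂ)) * U)ᴴ =
      diagonal (fun i => (a i : ℂ)) := by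
  rw [conjTranspose_mul, diagonal_conjTranspose, Matrix.mul_assoc, ← Matrix.mul_assoc U,
    hU, Matrix.one_mul, diagonal_mul_diagonal]
  congr 1
  ext i
  simp [← Complex.ofReal_mul, Real.mul_self_sqrt (ha i)]

lemma sum_norm_sq_diagonal_sqrt_mul_apply {U : Matrix ι ι ℂ} {c : ℝ}
    (hU : ∀ i j, ‖U i j‖ ^ 2 = c) {a : ι → ℝ} (ha : ∀ i, 0 ≤ a i) (j : ι) :
    ∑ i, ‖(diagonal (fun i => (√(a i) : ℂ)) * U) i j‖ ^ 2 = (∑ i, a i) * c := by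
  simp only [diagonal_mul, norm_mul, mul_pow, Complex.norm_real, Real.norm_of_nonneg
    (Real.sqrt_nonneg _), Real.sq_sqrt (ha _), hU, Finset.sum_mul]

end RowScaling

/-- Given positive reals `t_1, …, t_d` with `∑ 1/t_j = d`, there is an invertible complex
`d × d` matrix `S`, all of whose columns are unit vectors, with `S S^* = diag(1/t_1, …, 1/t_d)`. -/
theorem exists_unit_columns_diag (d : ℕ) (t : Fin d → ℝ) (ht : ∀ j, 0 < t j)
    (hsum : ∑ j : Fin d, (t j)⁻¹ = (d : ℝ)) :
    ∃ S : Matrix (Fin d) (Fin d) ℂ, IsUnit S ∧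
      (∀ j : Fin d, ∑ i : Fin d, ‖S i j‖ ^ 2 = 1) ∧
      S * Sᴴ = Matrix.diagonal (fun j => ((t j)⁻¹ : ℂ)) := by
  obtain ⟨U, hU, hflat⟩ := exists_mul_conjTranspose_eq_one_forall_norm_sq_eq (Fin d)
  have ha : ∀ i, 0 ≤ (t i)⁻¹ := fun i => (inv_pos.2 (ht i)).le
  refine ⟨diagonal (fun i => (√(t i)⁻¹ : ℂ)) * U, ?_, fun j => ?_, ?_⟩
  · refine (isUnit_diagonal.2 (Pi.isUnit_iff.2 fun i => ?_)).mul (IsUnit.of_mul_eq_one _ hU)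
    exact isUnit_iff_ne_zero.2 (Complex.ofReal_ne_zero.2 (Real.sqrt_pos.2 (inv_pos.2 (ht i))).ne')
  · rw [sum_norm_sq_diagonal_sqrt_mul_apply hflat ha, hsum, Fintype.card_fin,
      mul_inv_cancel₀ (Nat.cast_ne_zero.2 (Fin.pos j).ne')]
  · rw [diagonal_sqrt_mul_mul_conjTranspose hU ha]
    simp only [Complex.ofReal_inv]
end

section
/- Let T be an operator on ℂ^d of block upper-triangular form T = [[T_0, R],[0, T_1]] with respect to an orthogonal decomposition ℂ^d = H' ⊕ H'', where the spectral radius of T_0 is < 1 and T_1 is power-bounded. Then T is power-bounded, and its stable subspace {x : T^n x → 0} equals H' if moreover T_1^n x does not tend to 0 for any nonzero x ∈ H''. -/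
/-!
Writing `S n = ∑_{i<n} T₀ⁱ R T₁ⁿ⁻¹⁻ⁱ`, the powers are `Tⁿ = [[T₀ⁿ, S n], [0, T₁ⁿ]]`.
By Gelfand's formula `r(T₀) < 1` makes `∑ ‖T₀ⁿ‖` converge, so `‖S n‖ ≤ (∑ ‖T₀ⁱ‖) ‖R‖ sup ‖T₁ʲ‖`
and every block of `Tⁿ` is bounded. The `H''`-component of `Tⁿ x` is `T₁ⁿ x''`, so a stable `x`
has `x'' = 0`; conversely, if `x'' = 0` then `Tⁿ x = T₀ⁿ x' → 0`.
-/

open Filter Topology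
open scoped NNReal ENNReal Matrix Matrix.Norms.L2Operator

theorem summable_norm_pow_of_spectralRadius_lt_one {A : Type*} [NormedRing A] [NormedAlgebra ℂ A]
    [CompleteSpace A] {a : A} (ha : spectralRadius ℂ a < 1) : Summable (‖a ^ ·‖) := by
  obtain ⟨c, hac, hc1⟩ := ENNReal.lt_iff_exists_nnreal_btwn.mp ha
  have hc1 : (c : ℝ) < 1 := by exact_mod_cast hc1
  have hev : ∀ᶠ n : ℕ in atTop, (‖a ^ n‖₊ : ℝ≥0∞) ^ (1 / n : ℝ) < c :=
    (spectrum.pow_nnnorm_pow_one_div_tendsto_nhds_spectralRadius a).eventually_lt_const hac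
  refine Summable.of_norm_bounded_eventually_nat (summable_geometric_of_lt_one c.2 hc1) ?_
  filter_upwards [hev, eventually_gt_atTop 0] with n hn hn0
  rw [one_div, ENNReal.rpow_inv_lt_iff (by positivity), ENNReal.rpow_natCast] at hn
  rw [norm_norm]
  exact_mod_cast hn.le

theorem tendsto_pow_atTop_nhds_zero_of_spectralRadius_lt_one {A : Type*} [NormedRing A]
    [NormedAlgebra ℂ A] [CompleteSpace A] {a : A} (ha : spectralRadius ℂ a < 1) :
    Tendsto (a ^ ·) atTop (𝓝 0) :=
  tendsto_zero_iff_norm_tendsto_zero.mpr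
    (summable_norm_pow_of_spectralRadius_lt_one ha).tendsto_atTop_zero

theorem EuclideanSpace.norm_le_sum_norm_apply {𝕜 ι : Type*} [RCLike 𝕜] [Fintype ι]
    (x : EuclideanSpace 𝕜 ι) : ‖x‖ ≤ ∑ i, ‖x i‖ := by
  calc ‖x‖ = ‖∑ i, x i • EuclideanSpace.basisFun ι 𝕜 i‖ := by
        conv_lhs => rw [← (EuclideanSpace.basisFun ι 𝕜).sum_repr x]
        rfl
    _ ≤ ∑ i, ‖x i • EuclideanSpace.basisFun ι 𝕜 i‖ := norm_sum_le _ _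
    _ = ∑ i, ‖x i‖ := by simp [norm_smul]

namespace Matrix

section Blocks

variable {l m α : Type*} [Fintype l] [Fintype m] [DecidableEq l] [DecidableEq m]

theorem fromBlocks_zero₂₁_pow [Semiring α] (A : Matrix l l α) (B : Matrix l m α)
    (D : Matrix m m α) (n : ℕ) :
    fromBlocks A B 0 D ^ n =
      fromBlocks (A ^ n) (∑ i ∈ Finset.range n, A ^ i * B * D ^ (n - 1 - i)) 0 (D ^ n) := by
  induction n with
  | zero => simp [← fromBlocks_one]
  | succ n ih =>
    rw [pow_succ', ih, fromBlocks_multiply]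
    simp only [Matrix.zero_mul, Matrix.mul_zero, add_zero, zero_add, ← pow_succ']
    congr 1
    rw [Finset.sum_range_succ', Matrix.mul_sum, pow_zero, Matrix.one_mul, Nat.add_sub_cancel,
      Nat.sub_zero]
    refine congrArg (· + B * D ^ n) (Finset.sum_congr rfl fun i _ => ?_)
    rw [show n - 1 - i = n - (i + 1) by omega, pow_succ', Matrix.mul_assoc, Matrix.mul_assoc,
      Matrix.mul_assoc]

theorem setOf_tendsto_fromBlocks_zero₂₁_pow_mulVec [Semiring α] [TopologicalSpace α]
    [IsTopologicalSemiring α] {A : Matrix l l α} (hA : Tendsto (A ^ ·) atTop (𝓝 0))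
    (B : Matrix l m α) {D : Matrix m m α}
    (hD : ∀ y, Tendsto (fun n => D ^ n *ᵥ y) atTop (𝓝 0) → y = 0) :
    {x | Tendsto (fun n => fromBlocks A B 0 D ^ n *ᵥ x) atTop (𝓝 0)} =
      {x | ∀ j, x (Sum.inr j) = 0} := by
  ext x
  simp only [Set.mem_ofPred_eq, fromBlocks_zero₂₁_pow, fromBlocks_mulVec, zero_mulVec, zero_add,
    tendsto_pi_nhds, Sum.forall, Sum.elim_inl, Sum.elim_inr]
  constructor
  · rintro ⟨-, hinr⟩
    exact congrFun (hD _ (tendsto_pi_nhds.mpr hinr))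
  · intro hx
    have hx' : x ∘ Sum.inr = 0 := funext hx
    simp only [hx', mulVec_zero, add_zero, Pi.zero_apply, tendsto_const_nhds, implies_true,
      and_true]
    have hcont : Continuous fun C : Matrix l l α => C *ᵥ (x ∘ Sum.inl) :=
      continuous_id.matrix_mulVec continuous_const
    exact tendsto_pi_nhds.mp ((hcont.tendsto' 0 0 (zero_mulVec _)).comp hA)

end Blocks

variable {𝕜 l m n o : Type*} [RCLike 𝕜] [Fintype m] [Fintype n] [DecidableEq n]

theorem norm_apply_le_l2_opNorm (A : Matrix m n 𝕜) (i : m) (j : n) : ‖A i j‖ ≤ ‖A‖ := by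
  have h := A.l2_opNorm_mulVec (EuclideanSpace.single j 1)
  rw [PiLp.norm_single, norm_one, mul_one] at h
  calc ‖A i j‖ = ‖(WithLp.toLp 2 (A *ᵥ Pi.single j 1) : EuclideanSpace 𝕜 m) i‖ := by
        simp [mulVec_single]
    _ ≤ ‖A‖ := (PiLp.norm_apply_le _ i).trans h

theorem l2_opNorm_le_sum_norm_apply (A : Matrix m n 𝕜) : ‖A‖ ≤ ∑ i, ∑ j, ‖A i j‖ := by
  rw [l2_opNorm_def]
  refine ContinuousLinearMap.opNorm_le_bound _ (by positivity) fun x => ?_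
  rw [Finset.sum_mul]
  refine (EuclideanSpace.norm_le_sum_norm_apply _).trans (Finset.sum_le_sum fun i _ => ?_)
  calc ‖∑ j, A i j * x j‖ ≤ ∑ j, ‖A i j * x j‖ := norm_sum_le _ _
    _ ≤ (∑ j, ‖A i j‖) * ‖x‖ := by
      rw [Finset.sum_mul]
      gcongr with j
      rw [norm_mul]
      gcongr
      exact PiLp.norm_apply_le x j

theorem l2_opNorm_fromBlocks_le [Fintype l] [DecidableEq l] [Fintype o]
    (A : Matrix m n 𝕜) (B : Matrix m l 𝕜) (C : Matrix o n 𝕜) (D : Matrix o l 𝕜) :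
    ‖fromBlocks A B C D‖ ≤
      (Fintype.card (m ⊕ o) * Fintype.card (n ⊕ l)) * (‖A‖ + ‖B‖ + ‖C‖ + ‖D‖) := by
  have hentry : ∀ i j, ‖fromBlocks A B C D i j‖ ≤ ‖A‖ + ‖B‖ + ‖C‖ + ‖D‖ := by
    have := norm_nonneg A; have := norm_nonneg B; have := norm_nonneg C; have := norm_nonneg D
    rintro (i | i) (j | j)
    · linarith [fromBlocks_apply₁₁ A B C D i j ▸ norm_apply_le_l2_opNorm A i j]
    · linarith [fromBlocks_apply₁₂ A B C D i j ▸ norm_apply_le_l2_opNorm B i j]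
    · linarith [fromBlocks_apply₂₁ A B C D i j ▸ norm_apply_le_l2_opNorm C i j]
    · linarith [fromBlocks_apply₂₂ A B C D i j ▸ norm_apply_le_l2_opNorm D i j]
  calc ‖fromBlocks A B C D‖ ≤ ∑ i, ∑ j, ‖fromBlocks A B C D i j‖ :=
        l2_opNorm_le_sum_norm_apply _
    _ ≤ ∑ _i : m ⊕ o, ∑ _j : n ⊕ l, (‖A‖ + ‖B‖ + ‖C‖ + ‖D‖) := by
        gcongr with i _ j
        exact hentry i j
    _ = _ := by
      rw [Finset.sum_const, Finset.sum_const, Finset.card_univ, Finset.card_univ, nsmul_eq_mul,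
        nsmul_eq_mul, mul_assoc]

theorem l2_opNorm_sum_pow_mul_mul_pow_le [DecidableEq m] [Fintype l] [DecidableEq l]
    {A : Matrix m m 𝕜} (hA : Summable (‖A ^ ·‖)) (B : Matrix m l 𝕜) {D : Matrix l l 𝕜} {M : ℝ}
    (hD : ∀ n, ‖D ^ n‖ ≤ M) (n : ℕ) :
    ‖∑ i ∈ Finset.range n, A ^ i * B * D ^ (n - 1 - i)‖ ≤ (∑' i, ‖A ^ i‖) * ‖B‖ * M := by
  have hM : 0 ≤ M := (norm_nonneg _).trans (hD 0)
  calc ‖∑ i ∈ Finset.range n, A ^ i * B * D ^ (n - 1 - i)‖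
      ≤ ∑ i ∈ Finset.range n, ‖A ^ i‖ * ‖B‖ * M := by
        refine (norm_sum_le _ _).trans (Finset.sum_le_sum fun i _ => ?_)
        grw [l2_opNorm_mul, l2_opNorm_mul, hD]
    _ = (∑ i ∈ Finset.range n, ‖A ^ i‖) * ‖B‖ * M := by rw [Finset.sum_mul, Finset.sum_mul]
    _ ≤ (∑' i, ‖A ^ i‖) * ‖B‖ * M := by gcongr; exact hA.sum_le_tsum _ fun i _ => norm_nonneg _

theorem exists_forall_l2_opNorm_fromBlocks_zero₂₁_pow_le [DecidableEq m] [Fintype l]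
    [DecidableEq l] {A : Matrix m m 𝕜} (hA : Summable (‖A ^ ·‖)) (B : Matrix m l 𝕜)
    {D : Matrix l l 𝕜} {M : ℝ} (hD : ∀ n, ‖D ^ n‖ ≤ M) :
    ∃ C, ∀ n, ‖fromBlocks A B 0 D ^ n‖ ≤ C := by
  refine ⟨(Fintype.card (m ⊕ l) * Fintype.card (m ⊕ l)) *
    ((∑' i, ‖A ^ i‖) + (∑' i, ‖A ^ i‖) * ‖B‖ * M + 0 + M), fun n => ?_⟩
  rw [fromBlocks_zero₂₁_pow]
  grw [l2_opNorm_fromBlocks_le, hA.le_tsum n fun i _ => norm_nonneg _,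
    l2_opNorm_sum_pow_mul_mul_pow_le hA B hD, norm_zero, hD]

end Matrix

/-- A block upper-triangular matrix `T = [[T₀, R], [0, T₁]]` with `r(T₀) < 1` and `T₁`
power-bounded is itself power-bounded; moreover, if `T₁ⁿ x → 0` only for `x = 0`, then
the stable subspace `{x : Tⁿ x → 0}` of `T` is exactly the first summand `H'`. -/
theorem block_triangular_powerbounded_and_stable_subspace (l k : ℕ)
    (T₀ : Matrix (Fin l) (Fin l) ℂ) (hT₀ : spectralRadius ℂ T₀ < 1)
    (R : Matrix (Fin l) (Fin k) ℂ)
    (T₁ : Matrix (Fin k) (Fin k) ℂ) (hT₁ : ∃ M > 0, ∀ n : ℕ, ‖T₁ ^ n‖ < M)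
    (T : Matrix (Fin l ⊕ Fin k) (Fin l ⊕ Fin k) ℂ)
    (hT : T = Matrix.fromBlocks T₀ R 0 T₁) :
    (∃ M > 0, ∀ n : ℕ, ‖T ^ n‖ < M) ∧
      ((∀ x : Fin k → ℂ, x ≠ 0 →
          ¬ Tendsto (fun n : ℕ => (T₁ ^ n).mulVec x) atTop (nhds 0)) →
        {x : Fin l ⊕ Fin k → ℂ |
            Tendsto (fun n : ℕ => (T ^ n).mulVec x) atTop (nhds 0)} =
          {x : Fin l ⊕ Fin k → ℂ | ∀ j : Fin k, x (Sum.inr j) = 0}) := by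
  subst hT
  obtain ⟨M, -, hM⟩ := hT₁
  have hT₀sum := summable_norm_pow_of_spectralRadius_lt_one hT₀
  obtain ⟨C, hC⟩ :=
    Matrix.exists_forall_l2_opNorm_fromBlocks_zero₂₁_pow_le hT₀sum R fun n => (hM n).le
  refine ⟨⟨|C| + 1, by positivity, fun n => (hC n).trans_lt (by linarith [le_abs_self C])⟩, ?_⟩
  intro hstable
  -- The `L2`-operator-norm topology on matrices is, by construction, the entrywise one.
  exact Matrix.setOf_tendsto_fromBlocks_zero₂₁_pow_mulVec
    (tendsto_pow_atTop_nhds_zero_of_spectralRadius_lt_one hT₀) R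
    fun y hy => by_contra fun hy0 => hstable y hy0 hy
end

section
/- For T = [[0, R·E^*],[0, E^*]]^* acting on ℂ^l ⊕ ℂ^k (i.e., T^* = [[0, R E^*],[0, E^*]]) with E invertible, one has T^{*n}T^n = [[R E^{*n}E^n R^*, R E^{*n}E^n],[E^{*n}E^n R^*, E^{*n}E^n]] for all n ≥ 1; consequently if A_{E,C} = lim_n (1/n)∑_{j=1}^n E^{*j}E^j exists then A_{T,C} = [[R A_{E,C} R^*, R A_{E,C}],[A_{E,C} R^*, A_{E,C}]]. -/
open Filter Matrix

/-!
Taking adjoints, `T = [[0, 0], [E R^*, E]]`. The lower block row is `E` times `[R^*, 1]`, so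
`T^n = [[0, 0], [E^n R^*, E^n]]` and `T^{*n} T^n = [R^*, 1]^* (E^{*n} E^n) [R^*, 1]`. The map
`M ↦ [R^*, 1]^* M [R^*, 1]` is linear and continuous, hence commutes with Cesàro means.
-/

theorem Filter.Tendsto.smul_sum_map_of_continuous {R M N : Type*} [Semiring R]
    [AddCommMonoid M] [Module R M] [TopologicalSpace M]
    [AddCommMonoid N] [Module R N] [TopologicalSpace N]
    {f : M →ₗ[R] N} (hf : Continuous f) {c : ℕ → R} {a : ℕ → M} {A : M}
    (h : Tendsto (fun n => c n • ∑ j ∈ Finset.range n, a j) atTop (nhds A)) :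
    Tendsto (fun n => c n • ∑ j ∈ Finset.range n, f (a j)) atTop (nhds (f A)) := by
  simpa only [Function.comp_def, map_smul, map_sum] using (hf.tendsto A).comp h

namespace Matrix

variable {m n α : Type*} [Fintype n]

theorem fromBlocks_zero_zero_mul_pow [Fintype m] [DecidableEq m] [DecidableEq n] [Semiring α]
    (E : Matrix n n α) (S : Matrix n m α) (j : ℕ) :
    fromBlocks (0 : Matrix m m α) 0 (E * S) E ^ (j + 1) =
      fromBlocks 0 0 (E ^ (j + 1) * S) (E ^ (j + 1)) := by
  induction j with
  | zero => simp
  | succ j ih =>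
    rw [pow_succ, ih, fromBlocks_multiply]
    simp [pow_succ, Matrix.mul_assoc]

theorem conjTranspose_mul_self_fromBlocks_zero_zero [Fintype m] [CommSemiring α] [StarRing α]
    (P : Matrix n n α) (S : Matrix n m α) :
    (fromBlocks (0 : Matrix m m α) 0 (P * S) P)ᴴ * fromBlocks 0 0 (P * S) P =
      fromBlocks (Sᴴ * (Pᴴ * P) * S) (Sᴴ * (Pᴴ * P)) (Pᴴ * P * S) (Pᴴ * P) := by
  simp [fromBlocks_conjTranspose, fromBlocks_multiply, conjTranspose_mul, Matrix.mul_assoc]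

variable [CommSemiring α] [StarRing α]

def blockCongr (R : Matrix m n α) : Matrix n n α →ₗ[α] Matrix (m ⊕ n) (m ⊕ n) α where
  toFun M := fromBlocks (R * M * Rᴴ) (R * M) (M * Rᴴ) M
  map_add' M N := by simp [fromBlocks_add, Matrix.mul_add, Matrix.add_mul]
  map_smul' c M := by simp [fromBlocks_smul]

theorem continuous_blockCongr [TopologicalSpace α] [IsTopologicalSemiring α] (R : Matrix m n α) :
    Continuous (blockCongr R) :=
  Continuous.matrix_fromBlocks ((continuous_const.matrix_mul continuous_id).matrix_mul
    continuous_const) (continuous_const.matrix_mul continuous_id)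
    (continuous_id.matrix_mul continuous_const) continuous_id

end Matrix

theorem block_form_asymptotic_limit_general (l k : ℕ)
    (E : Matrix (Fin k) (Fin k) ℂ)
    (R : Matrix (Fin l) (Fin k) ℂ)
    (T : Matrix (Fin l ⊕ Fin k) (Fin l ⊕ Fin k) ℂ)
    (hT : Tᴴ = Matrix.fromBlocks 0 (R * Eᴴ) 0 Eᴴ) :
    (∀ n : ℕ, 1 ≤ n →
        (T ^ n)ᴴ * T ^ n =
          Matrix.fromBlocks (R * ((E ^ n)ᴴ * E ^ n) * Rᴴ) (R * ((E ^ n)ᴴ * E ^ n))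
            (((E ^ n)ᴴ * E ^ n) * Rᴴ) ((E ^ n)ᴴ * E ^ n)) ∧
      ∀ A : Matrix (Fin k) (Fin k) ℂ,
        Tendsto (fun n : ℕ =>
            ((n : ℂ)⁻¹ • ∑ j ∈ Finset.range n, (E ^ (j + 1))ᴴ * E ^ (j + 1)))
          atTop (nhds A) →
        Tendsto (fun n : ℕ =>
            ((n : ℂ)⁻¹ • ∑ j ∈ Finset.range n, (T ^ (j + 1))ᴴ * T ^ (j + 1)))
          atTop (nhds (Matrix.fromBlocks (R * A * Rᴴ) (R * A) (A * Rᴴ) A)) := by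
  have hT' : T = fromBlocks 0 0 (E * Rᴴ) E := by
    rw [← conjTranspose_conjTranspose T, hT]
    simp [fromBlocks_conjTranspose, conjTranspose_mul]
  have gram (j : ℕ) :
      (T ^ (j + 1))ᴴ * T ^ (j + 1) = blockCongr R ((E ^ (j + 1))ᴴ * E ^ (j + 1)) := by
    rw [hT', fromBlocks_zero_zero_mul_pow E Rᴴ, conjTranspose_mul_self_fromBlocks_zero_zero,
      conjTranspose_conjTranspose]
    rfl
  refine ⟨fun n hn => ?_, fun A hA => ?_⟩
  · obtain ⟨j, rfl⟩ := Nat.exists_eq_add_of_le' hn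
    exact gram j
  · simp only [gram]
    exact hA.smul_sum_map_of_continuous (continuous_blockCongr R)

/-- For `T` with `T^* = [[0, R E^*], [0, E^*]]` (`E` invertible), one has
`T^{*n} T^n = [[R E^{*n}E^n R^*, R E^{*n}E^n], [E^{*n}E^n R^*, E^{*n}E^n]]` for `n ≥ 1`;
consequently, if the Cesàro asymptotic limit `A_E` of `E` exists, then the Cesàro
asymptotic limit of `T` is `[[R A_E R^*, R A_E], [A_E R^*, A_E]]`. -/
theorem block_form_asymptotic_limit (l k : ℕ)
    (E : Matrix (Fin k) (Fin k) ℂ) (hE : IsUnit E)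
    (R : Matrix (Fin l) (Fin k) ℂ)
    (T : Matrix (Fin l ⊕ Fin k) (Fin l ⊕ Fin k) ℂ)
    (hT : Tᴴ = Matrix.fromBlocks 0 (R * Eᴴ) 0 Eᴴ) :
    (∀ n : ℕ, 1 ≤ n →
        (T ^ n)ᴴ * T ^ n =
          Matrix.fromBlocks (R * ((E ^ n)ᴴ * E ^ n) * Rᴴ) (R * ((E ^ n)ᴴ * E ^ n))
            (((E ^ n)ᴴ * E ^ n) * Rᴴ) ((E ^ n)ᴴ * E ^ n)) ∧
      ∀ A : Matrix (Fin k) (Fin k) ℂ,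
        Tendsto (fun n : ℕ =>
            ((n : ℂ)⁻¹ • ∑ j ∈ Finset.range n, (E ^ (j + 1))ᴴ * E ^ (j + 1)))
          atTop (nhds A) →
        Tendsto (fun n : ℕ =>
            ((n : ℂ)⁻¹ • ∑ j ∈ Finset.range n, (T ^ (j + 1))ᴴ * T ^ (j + 1)))
          atTop (nhds (Matrix.fromBlocks (R * A * Rᴴ) (R * A) (A * Rᴴ) A)) :=
  block_form_asymptotic_limit_general l k E R T hT
end

section
/- Let A = [[R B R^*, R B],[B R^*, B]] be the block positive semi-definite matrix on ℂ^l ⊕ ℂ^k determined by a positive matrix B ∈ ℂ^{k×k} and R ∈ ℂ^{l×k}. Then the unitary X = [[I_l, R],[−R^*, I_k]] · [[(I_l+RR^*)^{−1/2}, 0],[0, (I_k+R^*R)^{−1/2}]] satisfies X^{-1} A X = 0_l ⊕ ((I_k+R^*R)^{1/2} B (I_k+R^*R)^{1/2}). -/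
open scoped Matrix ComplexOrder

/-!
With `U = [[1, R], [-Rᴴ, 1]]`, the block columns of `U` are orthogonal, so
`Uᴴ U = diag (P², Q²)`; and `A = [R; 1] B [Rᴴ, 1]`, where the row `[Rᴴ, 1]` kills the first
block column of `U`, so `Uᴴ A U = diag (0, Q² B Q²)`. Conjugating by the Hermitian
`diag (P⁻¹, Q⁻¹)` turns these into `Xᴴ X = 1` and `Xᴴ A X = diag (0, Q B Q)`.
-/

namespace Matrix

variable {α : Type*} [CommRing α] [StarRing α] {m n : Type*}
  [Fintype m] [Fintype n] [DecidableEq m] [DecidableEq n]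

theorem fromBlocks_one_neg_conjTranspose_conjTranspose_mul_self (R : Matrix m n α) :
    (fromBlocks 1 R (-Rᴴ) 1)ᴴ * fromBlocks 1 R (-Rᴴ) 1 =
      fromBlocks (1 + R * Rᴴ) 0 0 (1 + Rᴴ * R) := by
  simp [fromBlocks_conjTranspose, fromBlocks_multiply, add_comm]

theorem fromBlocks_one_neg_conjTranspose_conjTranspose_mul_fromBlocks_mul_self
    (R : Matrix m n α) (B : Matrix n n α) :
    (fromBlocks 1 R (-Rᴴ) 1)ᴴ * fromBlocks (R * B * Rᴴ) (R * B) (B * Rᴴ) B *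
        fromBlocks 1 R (-Rᴴ) 1 =
      fromBlocks 0 0 0 ((1 + Rᴴ * R) * B * (1 + Rᴴ * R)) := by
  simp only [fromBlocks_conjTranspose, conjTranspose_one, conjTranspose_neg,
    conjTranspose_conjTranspose, fromBlocks_multiply]
  congr 1 <;>
    simp only [Matrix.mul_add, Matrix.add_mul, Matrix.mul_assoc, Matrix.one_mul, Matrix.mul_one,
      Matrix.neg_mul, Matrix.mul_neg] <;>
    abel

omit [DecidableEq m] [DecidableEq n] in
theorem fromBlocks_diagonal_conjTranspose_mul_mul (P M : Matrix m m α) (Q N : Matrix n n α) :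
    (fromBlocks P 0 0 Q)ᴴ * fromBlocks M 0 0 N * fromBlocks P 0 0 Q =
      fromBlocks (Pᴴ * M * P) 0 0 (Qᴴ * N * Q) := by
  simp [fromBlocks_conjTranspose, fromBlocks_multiply]

theorem IsHermitian.inv_conjTranspose_mul_mul_inv {P : Matrix m m α} (hP : P.IsHermitian)
    (hu : IsUnit P) (M : Matrix m m α) : P⁻¹ᴴ * (P * M * P) * P⁻¹ = M := by
  have hdet := (isUnit_iff_isUnit_det P).1 hu
  rw [hP.inv.eq, ← mul_assoc, ← mul_assoc, nonsing_inv_mul P hdet, one_mul, mul_assoc,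
    mul_nonsing_inv P hdet, mul_one]

end Matrix

open Matrix

theorem block_diagonalization_of_asymptotic_limit_general (l k : ℕ)
    (B : Matrix (Fin k) (Fin k) ℂ)
    (R : Matrix (Fin l) (Fin k) ℂ)
    (P : Matrix (Fin l) (Fin l) ℂ) (hP : P.PosDef) (hP2 : P ^ 2 = 1 + R * Rᴴ)
    (Q : Matrix (Fin k) (Fin k) ℂ) (hQ : Q.PosDef) (hQ2 : Q ^ 2 = 1 + Rᴴ * R)
    (A : Matrix (Fin l ⊕ Fin k) (Fin l ⊕ Fin k) ℂ)
    (hA : A = Matrix.fromBlocks (R * B * Rᴴ) (R * B) (B * Rᴴ) B)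
    (X : Matrix (Fin l ⊕ Fin k) (Fin l ⊕ Fin k) ℂ)
    (hX : X = Matrix.fromBlocks 1 R (-Rᴴ) 1 * Matrix.fromBlocks P⁻¹ 0 0 Q⁻¹) :
    X ∈ Matrix.unitaryGroup (Fin l ⊕ Fin k) ℂ ∧
      X⁻¹ * A * X = Matrix.fromBlocks 0 0 0 (Q * B * Q) := by
  have hX_congr (M : Matrix (Fin l ⊕ Fin k) (Fin l ⊕ Fin k) ℂ) :
      Xᴴ * M * X = (fromBlocks P⁻¹ 0 0 Q⁻¹)ᴴ *
        ((fromBlocks 1 R (-Rᴴ) 1)ᴴ * M * fromBlocks 1 R (-Rᴴ) 1) *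
          fromBlocks P⁻¹ 0 0 Q⁻¹ := by
    simp only [hX, conjTranspose_mul, Matrix.mul_assoc]
  have hP_sq : P ^ 2 = P * 1 * P := by rw [mul_one, pow_two]
  have hQ_sq : Q ^ 2 = Q * 1 * Q := by rw [mul_one, pow_two]
  have hQBQ : Q ^ 2 * B * Q ^ 2 = Q * (Q * B * Q) * Q := by
    simp only [pow_two, Matrix.mul_assoc]
  have hXX : Xᴴ * X = 1 := by
    rw [← Matrix.mul_one Xᴴ, hX_congr, Matrix.mul_one,
      fromBlocks_one_neg_conjTranspose_conjTranspose_mul_self, ← hP2, ← hQ2,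
      fromBlocks_diagonal_conjTranspose_mul_mul, hP_sq, hQ_sq,
      hP.isHermitian.inv_conjTranspose_mul_mul_inv hP.isUnit,
      hQ.isHermitian.inv_conjTranspose_mul_mul_inv hQ.isUnit, fromBlocks_one]
  refine ⟨mem_unitaryGroup_iff'.2 hXX, ?_⟩
  rw [inv_eq_left_inv hXX, hX_congr, hA,
    fromBlocks_one_neg_conjTranspose_conjTranspose_mul_fromBlocks_mul_self, ← hQ2, hQBQ,
    fromBlocks_diagonal_conjTranspose_mul_mul,
    hQ.isHermitian.inv_conjTranspose_mul_mul_inv hQ.isUnit]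
  simp

/-- Let `A = [[R B R^*, R B], [B R^*, B]]` with `B` positive semi-definite, and let
`P = (I + R R^*)^{1/2}` and `Q = (I + R^* R)^{1/2}` be the positive square roots. Then
`X = [[I, R], [-R^*, I]] · [[P⁻¹, 0], [0, Q⁻¹]]` is unitary and
`X⁻¹ A X = 0 ⊕ (Q B Q)`. -/
theorem block_diagonalization_of_asymptotic_limit (l k : ℕ)
    (B : Matrix (Fin k) (Fin k) ℂ) (hB : B.PosSemidef)
    (R : Matrix (Fin l) (Fin k) ℂ)
    (P : Matrix (Fin l) (Fin l) ℂ) (hP : P.PosDef) (hP2 : P ^ 2 = 1 + R * Rᴴ)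
    (Q : Matrix (Fin k) (Fin k) ℂ) (hQ : Q.PosDef) (hQ2 : Q ^ 2 = 1 + Rᴴ * R)
    (A : Matrix (Fin l ⊕ Fin k) (Fin l ⊕ Fin k) ℂ)
    (hA : A = Matrix.fromBlocks (R * B * Rᴴ) (R * B) (B * Rᴴ) B)
    (X : Matrix (Fin l ⊕ Fin k) (Fin l ⊕ Fin k) ℂ)
    (hX : X = Matrix.fromBlocks 1 R (-Rᴴ) 1 * Matrix.fromBlocks P⁻¹ 0 0 Q⁻¹) :
    X ∈ Matrix.unitaryGroup (Fin l ⊕ Fin k) ℂ ∧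
      X⁻¹ * A * X = Matrix.fromBlocks 0 0 0 (Q * B * Q) :=
  block_diagonalization_of_asymptotic_limit_general l k B R P hP hP2 Q hQ hQ2 A hA X hX
end

section
/- Let T be a bounded operator on a complex Hilbert space H such that the Cesàro asymptotic limit A_{T,C} = weak-lim (1/n)∑_{j=1}^n T^{*j}T^j exists and is nonzero. Then ‖A_{T,C}‖ ≥ 1. -/
/-!
The quadratic form of `A` is the Cesàro mean of `‖T^j x‖²`, and a Cesàro mean does not change
when the sequence is shifted by one; hence `⟪A (T^k x), T^k x⟫ = ⟪A x, x⟫` for every `k`.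
So `‖⟪A x, x⟫‖ = ‖⟪A (T^j x), T^j x⟫‖ ≤ ‖A‖ ‖T^j x‖²` for every `j`, and averaging over `j`
gives `‖⟪A x, x⟫‖ ≤ ‖A‖ Re ⟪A x, x⟫ ≤ ‖A‖ ‖⟪A x, x⟫‖`; by polarization `⟪A x, x⟫ ≠ 0` for
some `x` as `A ≠ 0`.
-/

open Filter

local notation "⟪" x ", " y "⟫" => @inner ℂ _ _ x y

theorem Filter.Tendsto.cesaro_shift {𝕜 : Type*} [Field 𝕜] [TopologicalSpace 𝕜]
    [IsTopologicalRing 𝕜] [CharZero 𝕜] [ContinuousSMul ℚ≥0 𝕜] {a : ℕ → 𝕜} {L : 𝕜}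
    (h : Tendsto (fun n : ℕ => (n : 𝕜)⁻¹ * ∑ j ∈ Finset.range n, a j) atTop (nhds L)) :
    Tendsto (fun n : ℕ => (n : 𝕜)⁻¹ * ∑ j ∈ Finset.range n, a (j + 1)) atTop (nhds L) := by
  have hinv : Tendsto (fun n : ℕ => (n : 𝕜)⁻¹) atTop (nhds 0) := tendsto_inv_atTop_nhds_zero_nat
  have hmean : Tendsto (fun n : ℕ => ((n + 1 : ℕ) : 𝕜)⁻¹ * ∑ j ∈ Finset.range (n + 1), a j)
      atTop (nhds L) := h.comp (tendsto_add_atTop_nat 1)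
  -- `n⁻¹ ∑_{j<n} a (j+1) = (1 + n⁻¹) ((n+1)⁻¹ ∑_{j<n+1} a j) - n⁻¹ a 0`
  have hlim := ((tendsto_const_nhds (x := (1 : 𝕜))).add hinv |>.mul hmean).sub
    (hinv.mul_const (a 0))
  rw [add_zero, one_mul, zero_mul, sub_zero] at hlim
  refine hlim.congr' ?_
  filter_upwards [eventually_ne_atTop 0] with n hn
  have hn : (n : 𝕜) ≠ 0 := Nat.cast_ne_zero.mpr hn
  rw [Finset.sum_range_succ']
  push_cast
  field_simp
  ring

theorem le_of_tendsto_cesaro {a : ℕ → ℝ} {b L : ℝ} (hb : ∀ j, b ≤ a j)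
    (h : Tendsto (fun n : ℕ => (n : ℝ)⁻¹ * ∑ j ∈ Finset.range n, a j) atTop (nhds L)) :
    b ≤ L := by
  refine ge_of_tendsto h ?_
  filter_upwards [eventually_gt_atTop 0] with n hn
  have hsum : n • b ≤ ∑ j ∈ Finset.range n, a j := by
    simpa using Finset.card_nsmul_le_sum (Finset.range n) a b fun j _ => hb j
  rw [nsmul_eq_mul] at hsum
  rwa [le_inv_mul_iff₀ (by exact_mod_cast hn)]

/-- `A` is the weak limit of the Cesàro means `n⁻¹ ∑_{j=1}^n T^{*j} T^j`. -/
def IsCesaroAsymptoticLimit {H : Type*} [NormedAddCommGroup H] [InnerProductSpace ℂ H]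
    (T A : H →L[ℂ] H) : Prop :=
  ∀ x y : H, Tendsto (fun n : ℕ =>
      (n : ℂ)⁻¹ * ∑ j ∈ Finset.range n, ⟪(T ^ (j + 1)) x, (T ^ (j + 1)) y⟫)
    atTop (nhds ⟪A x, y⟫)

namespace IsCesaroAsymptoticLimit

variable {H : Type*} [NormedAddCommGroup H] [InnerProductSpace ℂ H] {T A : H →L[ℂ] H}

theorem inner_apply_apply (hA : IsCesaroAsymptoticLimit T A) (x y : H) :
    ⟪A (T x), T y⟫ = ⟪A x, y⟫ := by
  have hpow : ∀ (j : ℕ) (z : H), (T ^ (j + 1)) (T z) = (T ^ (j + 1 + 1)) z := fun j z => by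
    rw [pow_succ T (j + 1)]
    rfl
  refine tendsto_nhds_unique (hA (T x) (T y)) ?_
  simpa only [hpow] using (hA x y).cesaro_shift

theorem inner_pow_apply_self (hA : IsCesaroAsymptoticLimit T A) (k : ℕ) (x : H) :
    ⟪A ((T ^ k) x), (T ^ k) x⟫ = ⟪A x, x⟫ := by
  induction k generalizing x with
  | zero => rfl
  | succ k ih =>
    rw [pow_succ]
    exact (ih (T x)).trans (hA.inner_apply_apply x x)

theorem tendsto_cesaro_norm_sq (hA : IsCesaroAsymptoticLimit T A) (x : H) :
    Tendsto (fun n : ℕ => (n : ℝ)⁻¹ * ∑ j ∈ Finset.range n, ‖(T ^ (j + 1)) x‖ ^ 2) atTop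
      (nhds ⟪A x, x⟫.re) := by
  refine ((Complex.continuous_re.tendsto _).comp (hA x x)).congr fun n => ?_
  rw [Function.comp_apply, ← Complex.ofReal_natCast, ← Complex.ofReal_inv,
    Complex.re_ofReal_mul, Complex.re_sum]
  simp only [← RCLike.re_to_complex, inner_self_eq_norm_sq]

theorem norm_inner_self_le (hA : IsCesaroAsymptoticLimit T A) (x : H) :
    ‖⟪A x, x⟫‖ ≤ ‖A‖ * ‖⟪A x, x⟫‖ := by
  have hterm : ∀ j : ℕ, ‖⟪A x, x⟫‖ ≤ ‖A‖ * ‖(T ^ (j + 1)) x‖ ^ 2 := fun j => by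
    rw [← hA.inner_pow_apply_self (j + 1) x, sq, ← mul_assoc]
    exact (norm_inner_le_norm _ _).trans
      (mul_le_mul_of_nonneg_right (A.le_opNorm _) (norm_nonneg _))
  have hmean : Tendsto (fun n : ℕ =>
      (n : ℝ)⁻¹ * ∑ j ∈ Finset.range n, ‖A‖ * ‖(T ^ (j + 1)) x‖ ^ 2) atTop
      (nhds (‖A‖ * ⟪A x, x⟫.re)) :=
    ((hA.tendsto_cesaro_norm_sq x).const_mul ‖A‖).congr fun n => by
      rw [← Finset.mul_sum]
      ring
  calc ‖⟪A x, x⟫‖ ≤ ‖A‖ * ⟪A x, x⟫.re := le_of_tendsto_cesaro hterm hmean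
    _ ≤ ‖A‖ * ‖⟪A x, x⟫‖ := mul_le_mul_of_nonneg_left (Complex.re_le_norm _) (norm_nonneg A)

end IsCesaroAsymptoticLimit

theorem norm_cesaro_asymptotic_limit_ge_one_general
    {H : Type*} [NormedAddCommGroup H] [InnerProductSpace ℂ H]
    (T A : H →L[ℂ] H)
    (hA : ∀ x y : H,
      Tendsto (fun n : ℕ =>
          (n : ℂ)⁻¹ * ∑ j ∈ Finset.range n, ⟪(T ^ (j + 1)) x, (T ^ (j + 1)) y⟫)
        atTop (nhds ⟪A x, y⟫))
    (hA0 : A ≠ 0) :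
    1 ≤ ‖A‖ := by
  have hA : IsCesaroAsymptoticLimit T A := hA
  obtain ⟨x, hx⟩ : ∃ x, ⟪A x, x⟫ ≠ 0 := by
    by_contra! h
    exact hA0 (ContinuousLinearMap.coe_injective ((inner_map_self_eq_zero _).mp h))
  have hpos : 0 < ‖⟪A x, x⟫‖ := norm_pos_iff.mpr hx
  exact le_of_mul_le_mul_right (by simpa using hA.norm_inner_self_le x) hpos

/-- If the Cesàro asymptotic limit `A = weak-lim (1/n) ∑_{j=1}^n T^{*j} T^j` of a bounded
operator `T` on a complex Hilbert space exists and is nonzero, then `‖A‖ ≥ 1`. -/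
theorem norm_cesaro_asymptotic_limit_ge_one
    {H : Type*} [NormedAddCommGroup H] [InnerProductSpace ℂ H] [CompleteSpace H]
    (T A : H →L[ℂ] H)
    (hA : ∀ x y : H,
      Tendsto (fun n : ℕ =>
          (n : ℂ)⁻¹ * ∑ j ∈ Finset.range n, ⟪(T ^ (j + 1)) x, (T ^ (j + 1)) y⟫)
        atTop (nhds ⟪A x, y⟫))
    (hA0 : A ≠ 0) :
    1 ≤ ‖A‖ :=
  norm_cesaro_asymptotic_limit_ge_one_general T A hA hA0
end
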